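/- Let d be odd, M a maximally isotropic subgroup of (ZMod d)^{2n} (isotropic with |M|=d^n) and v ∈ (ZMod d)^{2n}. The Wigner function of the stabilizer state |M,v⟩ is the normalized indicator function of the coset M+v: W_{|M,v⟩}(a) = d^{-n} if a ∈ M+v and 0 otherwise. -/

import Mathlib

open scoped BigOperators
open Finset Matrix
open scoped ComplexOrder

attribute [instance] Classical.propDecidable

/-- The character `χ(t) = exp(2πit/d)` on `ZMod d`. -/
noncomputable def chi (d : ℕ) (t : ZMod d) : ℂ :=
  Complex.exp (2 * Real.pi * Complex.I * (t.val : ℂ) / (d : ℂ))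

/-- The standard symplectic form on `(Fin n → R) × (Fin n → R)`. -/
def symp (R : Type) [CommRing R] (n : ℕ) (v w : (Fin n → R) × (Fin n → R)) : R :=
  (∑ i, v.1 i * w.2 i) - ∑ i, v.2 i * w.1 i

/-- Single-particle Weyl operator `w(p,q) = χ(-2⁻¹pq) ẑ(p) x̂(q)` on `ℂ^d`. -/
noncomputable def weyl1 (d : ℕ) (p q : ZMod d) : Matrix (ZMod d) (ZMod d) ℂ :=
  Matrix.of fun x y => chi d (-(2⁻¹ : ZMod d) * p * q + p * x) * (if y = x - q then 1 else 0)

/-- Multi-particle Weyl operator on `(ℂ^d)^{⊗n}` in coordinates. -/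
noncomputable def weyl (d n : ℕ) (p q : Fin n → ZMod d) :
    Matrix (Fin n → ZMod d) (Fin n → ZMod d) ℂ :=
  Matrix.of fun x y =>
    chi d (-(2⁻¹ : ZMod d) * (∑ i, p i * q i) + ∑ i, p i * x i) * (if y = x - q then 1 else 0)

/-- Weyl operator indexed by a phase space point. -/
noncomputable def weylV (d n : ℕ) (v : (Fin n → ZMod d) × (Fin n → ZMod d)) :
    Matrix (Fin n → ZMod d) (Fin n → ZMod d) ℂ :=
  weyl d n v.1 v.2

/-- Action of the Weyl operator on wave functions:
`(w(p,q)ψ)(y) = χ(-2⁻¹pq + py) ψ(y-q)`. -/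
noncomputable def weylAct (d n : ℕ) (p q : Fin n → ZMod d) (ψ : (Fin n → ZMod d) → ℂ) :
    (Fin n → ZMod d) → ℂ :=
  fun y => chi d (-(2⁻¹ : ZMod d) * (∑ i, p i * q i) + ∑ i, p i * y i) * ψ (y - q)

/-- Wigner function of a pure state `ψ`. -/
noncomputable def wignerPure (d n : ℕ) [NeZero d] (ψ : (Fin n → ZMod d) → ℂ)
    (p q : Fin n → ZMod d) : ℂ :=
  ((d : ℂ) ^ n)⁻¹ * ∑ ξ : Fin n → ZMod d, chi d (-(∑ i, ξ i * p i)) *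
    (starRingEnd ℂ) (ψ (q - (2⁻¹ : ZMod d) • ξ)) * ψ (q + (2⁻¹ : ZMod d) • ξ)

/-!
Write `c(b) = tr(w(b)† |ψ⟩⟨ψ|)`. The Weyl operators are orthogonal, so `Σ_b |c(b)|² = d^n` for
a unit vector `ψ`, while the stabilizer condition gives `c(m) = χ([v,m])`, of modulus one, at each of
the `d^n` points of `M`: this already exhausts the total mass, so `c` vanishes off `M`. The Wigner
function becomes `d^{-2n} Σ_{m ∈ M} χ([v - a, m])`. The same saturation argument evaluates this
character sum: isotropy makes it `d^n` on `M`, and by Parseval its squared modulus summed over phase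
space is `d^{2n} |M|`, which is again all used up on `M`.
-/

section Character

variable {d : ℕ} [NeZero d]

theorem chi_eq_stdAddChar (t : ZMod d) : chi d t = ZMod.stdAddChar t := by
  rw [ZMod.stdAddChar_apply, ZMod.toCircle_apply, chi]

theorem chi_add (s t : ZMod d) : chi d (s + t) = chi d s * chi d t := by
  simp only [chi_eq_stdAddChar, AddChar.map_add_eq_mul]

theorem chi_zero : chi d 0 = 1 := by
  rw [chi_eq_stdAddChar, AddChar.map_zero_eq_one]

theorem conj_chi (t : ZMod d) : starRingEnd ℂ (chi d t) = chi d (-t) := by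
  rw [chi_eq_stdAddChar, chi_eq_stdAddChar, AddChar.map_neg_eq_conj]

theorem chi_mul_conj_chi (s t : ZMod d) : chi d s * starRingEnd ℂ (chi d t) = chi d (s - t) := by
  rw [conj_chi, ← chi_add, sub_eq_add_neg]

theorem normSq_chi (t : ZMod d) : Complex.normSq (chi d t) = 1 := by
  rw [Complex.normSq_eq_norm_sq, chi_eq_stdAddChar, AddChar.norm_apply, one_pow]

theorem chi_sum {ι : Type*} (s : Finset ι) (f : ι → ZMod d) :
    chi d (∑ i ∈ s, f i) = ∏ i ∈ s, chi d (f i) := by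
  induction s using Finset.cons_induction with
  | empty => rw [Finset.sum_empty, Finset.prod_empty, chi_zero]
  | cons a s _ ih => rw [Finset.sum_cons, Finset.prod_cons, chi_add, ih]

theorem sum_chi_mul (c : ZMod d) : ∑ t, chi d (t * c) = if c = 0 then (d : ℂ) else 0 := by
  simp only [chi_eq_stdAddChar, AddChar.sum_mulShift c (ZMod.isPrimitive_stdAddChar d),
    ZMod.card, Nat.cast_ite, Nat.cast_zero]

theorem sum_chi_dotProduct {ι : Type*} [Fintype ι] [DecidableEq ι] (c : ι → ZMod d) :
    ∑ x : ι → ZMod d, chi d (x ⬝ᵥ c) = if c = 0 then (d : ℂ) ^ Fintype.card ι else 0 := by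
  simp only [dotProduct, chi_sum]
  rw [← Fintype.prod_sum fun i t => chi d (t * c i)]
  simp only [sum_chi_mul, Finset.prod_ite_zero]
  simp [funext_iff]

theorem sum_chi_dotProduct_mul_conj {ι : Type*} [Fintype ι] [DecidableEq ι] (y y' : ι → ZMod d) :
    ∑ p : ι → ZMod d, chi d (p ⬝ᵥ y) * starRingEnd ℂ (chi d (p ⬝ᵥ y')) =
      if y = y' then ((d ^ Fintype.card ι : ℕ) : ℂ) else 0 := by
  simp only [chi_mul_conj_chi, ← dotProduct_sub, sum_chi_dotProduct, sub_eq_zero, Nat.cast_pow]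

end Character

theorem sum_normSq_sum_mul_of_orthogonal {G ι : Type*} [Fintype G] [Fintype ι] [DecidableEq ι]
    (e : G → ι → ℂ) (N : ℝ)
    (horth : ∀ i j, ∑ u, e u i * starRingEnd ℂ (e u j) = if i = j then (N : ℂ) else 0)
    (f : ι → ℂ) :
    ∑ u, Complex.normSq (∑ i, e u i * f i) = N * ∑ i, Complex.normSq (f i) := by
  apply Complex.ofReal_injective
  push_cast
  simp only [← Complex.mul_conj, map_sum, map_mul, Finset.sum_mul_sum]
  calc ∑ u, ∑ i, ∑ j, e u i * f i * (starRingEnd ℂ (e u j) * starRingEnd ℂ (f j))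
      = ∑ i, ∑ j, (∑ u, e u i * starRingEnd ℂ (e u j)) * (f i * starRingEnd ℂ (f j)) := by
        simp only [Finset.sum_mul]
        rw [Finset.sum_comm]
        refine Finset.sum_congr rfl fun i _ => ?_
        rw [Finset.sum_comm]
        exact Finset.sum_congr rfl fun j _ => Finset.sum_congr rfl fun u _ => by ring
    _ = N * ∑ i, f i * starRingEnd ℂ (f i) := by
        simp [horth, Finset.mul_sum]

theorem eq_zero_of_sum_normSq_eq_card_mul {ι : Type*} [Fintype ι] (f : ι → ℂ) (s : Set ι)
    (c : ℝ) (hs : ∀ i ∈ s, Complex.normSq (f i) = c)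
    (htot : ∑ i, Complex.normSq (f i) = Nat.card s * c) {i : ι} (hi : i ∉ s) : f i = 0 := by
  classical
  have hin : ∑ j : s, Complex.normSq (f j) = Nat.card s * c := by
    rw [Finset.sum_congr rfl fun (j : s) _ => hs j j.2, Finset.sum_const, Finset.card_univ,
      nsmul_eq_mul, Nat.card_eq_fintype_card]
  rw [← Fintype.sum_subtype_add_sum_subtype (· ∈ s), hin, add_eq_left] at htot
  have hout := (Fintype.sum_eq_zero_iff_of_nonneg fun j => Complex.normSq_nonneg _).mp htot
  exact Complex.normSq_eq_zero.mp (congrFun hout ⟨i, hi⟩)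

section Symplectic

variable {n : ℕ} (R : Type) [CommRing R]

theorem symp_eq_dotProduct (u w : (Fin n → R) × (Fin n → R)) :
    symp R n u w = u.1 ⬝ᵥ w.2 - u.2 ⬝ᵥ w.1 := rfl

theorem symp_sub_left (u u' w : (Fin n → R) × (Fin n → R)) :
    symp R n (u - u') w = symp R n u w - symp R n u' w := by
  simp only [symp_eq_dotProduct, Prod.fst_sub, Prod.snd_sub, sub_dotProduct]
  ring

theorem symp_sub_right (u w w' : (Fin n → R) × (Fin n → R)) :
    symp R n u (w - w') = symp R n u w - symp R n u w' := by
  simp only [symp_eq_dotProduct, Prod.fst_sub, Prod.snd_sub, dotProduct_sub]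
  ring

end Symplectic

section Lagrangian

variable {d n : ℕ} [NeZero d]

theorem sum_chi_symp (w : (Fin n → ZMod d) × (Fin n → ZMod d)) :
    ∑ u, chi d (symp (ZMod d) n u w) = if w = 0 then (d : ℂ) ^ (2 * n) else 0 := by
  have hsplit : ∀ u : (Fin n → ZMod d) × (Fin n → ZMod d),
      chi d (symp (ZMod d) n u w) = chi d (u.1 ⬝ᵥ w.2) * chi d (u.2 ⬝ᵥ -w.1) := fun u => by
    rw [← chi_add, symp_eq_dotProduct, dotProduct_neg, sub_eq_add_neg]
  simp only [hsplit, Fintype.sum_prod_type, ← Finset.sum_mul_sum]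
  rw [sum_chi_dotProduct, sum_chi_dotProduct]
  simp only [ite_zero_mul_ite_zero, Fintype.card_fin, neg_eq_zero, Prod.ext_iff, Prod.fst_zero,
    Prod.snd_zero, and_comm, ← pow_add, two_mul]

variable (M : AddSubgroup ((Fin n → ZMod d) × (Fin n → ZMod d)))

theorem sum_normSq_sum_chi_symp :
    ∑ u, Complex.normSq (∑ m : M, chi d (symp (ZMod d) n u m)) = d ^ (2 * n) * Nat.card M := by
  classical
  have horth : ∀ m m' : M, ∑ u, chi d (symp (ZMod d) n u m) *
      starRingEnd ℂ (chi d (symp (ZMod d) n u m')) =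
        if m = m' then ((d ^ (2 * n) : ℕ) : ℂ) else 0 := fun m m' => by
    simp only [chi_mul_conj_chi, ← symp_sub_right, sum_chi_symp, sub_eq_zero, Subtype.ext_iff,
      Nat.cast_pow]
  simpa [Nat.card_eq_fintype_card] using sum_normSq_sum_mul_of_orthogonal _ _ horth fun _ => 1

theorem sum_chi_symp_of_mem (hiso : ∀ m₁ ∈ M, ∀ m₂ ∈ M, symp (ZMod d) n m₁ m₂ = 0)
    {u : (Fin n → ZMod d) × (Fin n → ZMod d)} (hu : u ∈ M) :
    ∑ m : M, chi d (symp (ZMod d) n u m) = Nat.card M := by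
  simp [hiso u hu _, chi_zero, Nat.card_eq_fintype_card]

theorem sum_chi_symp_eq_ite_mem (hiso : ∀ m₁ ∈ M, ∀ m₂ ∈ M, symp (ZMod d) n m₁ m₂ = 0)
    (hcard : Nat.card M = d ^ n) (u : (Fin n → ZMod d) × (Fin n → ZMod d)) :
    ∑ m : M, chi d (symp (ZMod d) n u m) = if u ∈ M then (d : ℂ) ^ n else 0 := by
  split_ifs with hu
  · rw [sum_chi_symp_of_mem M hiso hu, hcard, Nat.cast_pow]
  · refine eq_zero_of_sum_normSq_eq_card_mul (fun u => ∑ m : M, chi d (symp (ZMod d) n u m)) M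
      (Nat.card M * Nat.card M) (fun u hu => ?_) ?_ hu
    · rw [sum_chi_symp_of_mem M hiso hu, Complex.normSq_natCast]
    · rw [sum_normSq_sum_chi_symp, SetLike.coe_sort_coe, hcard]
      push_cast
      ring

end Lagrangian

theorem trace_conjTranspose_mul_vecMulVec {ι : Type*} [Fintype ι] (W : Matrix ι ι ℂ)
    (ψ : ι → ℂ) : trace (Wᴴ * vecMulVec ψ (star ψ)) = ψ ⬝ᵥ star (W *ᵥ ψ) := by
  rw [trace_mul_comm, vecMulVec_mul, trace_vecMulVec, star_mulVec]

theorem trace_conjTranspose_mul_vecMulVec_of_smul_mulVec_eq {ι : Type*} [Fintype ι]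
    {W : Matrix ι ι ℂ} {ψ : ι → ℂ} {c : ℂ} (hc : Complex.normSq c = 1) (h : c • (W *ᵥ ψ) = ψ) :
    trace (Wᴴ * vecMulVec ψ (star ψ)) = c * ∑ x, Complex.normSq (ψ x) := by
  have hnorm : ∀ x, Complex.normSq ((W *ᵥ ψ) x) = Complex.normSq (ψ x) := fun x => by
    rw [← congrFun h x, Pi.smul_apply, smul_eq_mul, Complex.normSq_mul, hc, one_mul]
  calc trace (Wᴴ * vecMulVec ψ (star ψ)) = (c • (W *ᵥ ψ)) ⬝ᵥ star (W *ᵥ ψ) := by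
        rw [trace_conjTranspose_mul_vecMulVec, h]
    _ = c * ∑ x, Complex.normSq (ψ x) := by
        rw [smul_dotProduct]
        simp only [dotProduct, Pi.star_apply, RCLike.star_def, Complex.mul_conj, hnorm,
          smul_eq_mul, Complex.ofReal_sum]

section Weyl

variable {d n : ℕ} [NeZero d]

theorem weylV_mulVec (b : (Fin n → ZMod d) × (Fin n → ZMod d)) (ψ : (Fin n → ZMod d) → ℂ) :
    weylV d n b *ᵥ ψ = weylAct d n b.1 b.2 ψ := by
  ext y
  simp [mulVec, dotProduct, weylV, weyl, weylAct]

theorem normSq_trace_weylV (b : (Fin n → ZMod d) × (Fin n → ZMod d))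
    (ψ : (Fin n → ZMod d) → ℂ) :
    Complex.normSq (trace ((weylV d n b)ᴴ * vecMulVec ψ (star ψ))) =
      Complex.normSq (∑ y, chi d (b.1 ⬝ᵥ y) * (ψ (y - b.2) * starRingEnd ℂ (ψ y))) := by
  have hconj : starRingEnd ℂ (trace ((weylV d n b)ᴴ * vecMulVec ψ (star ψ))) =
      chi d (-(2⁻¹ : ZMod d) * (b.1 ⬝ᵥ b.2)) *
        ∑ y, chi d (b.1 ⬝ᵥ y) * (ψ (y - b.2) * starRingEnd ℂ (ψ y)) := by
    simp only [trace_conjTranspose_mul_vecMulVec, weylV_mulVec, weylAct, dotProduct, map_sum,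
      map_mul, Pi.star_apply, RCLike.star_def, Complex.conj_conj, Finset.mul_sum, chi_add]
    exact Finset.sum_congr rfl fun y _ => by ring
  rw [← Complex.normSq_conj, hconj, Complex.normSq_mul, normSq_chi, one_mul]

theorem sum_normSq_trace_weylV (ψ : (Fin n → ZMod d) → ℂ) :
    ∑ b, Complex.normSq (trace ((weylV d n b)ᴴ * vecMulVec ψ (star ψ))) =
      d ^ n * (∑ x, Complex.normSq (ψ x)) ^ 2 := by
  calc ∑ b, Complex.normSq (trace ((weylV d n b)ᴴ * vecMulVec ψ (star ψ)))
      = ∑ q, ∑ p, Complex.normSq (∑ y, chi d (p ⬝ᵥ y) * (ψ (y - q) * starRingEnd ℂ (ψ y))) := by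
        simp only [normSq_trace_weylV]
        rw [Fintype.sum_prod_type, Finset.sum_comm]
    _ = ∑ q, d ^ n * ∑ y, Complex.normSq (ψ (y - q)) * Complex.normSq (ψ y) := by
        simp only [sum_normSq_sum_mul_of_orthogonal _ _ sum_chi_dotProduct_mul_conj,
          Fintype.card_fin, Complex.normSq_mul, Complex.normSq_conj, Nat.cast_pow]
    _ = d ^ n * (∑ x, Complex.normSq (ψ x)) ^ 2 := by
        rw [← Finset.mul_sum, Finset.sum_comm, sq, Finset.sum_mul]
        refine congrArg _ (Finset.sum_congr rfl fun y _ => ?_)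
        rw [← Finset.sum_mul, mul_comm]
        exact congrArg _ (Equiv.sum_comp (Equiv.subLeft y) fun x => Complex.normSq (ψ x))

end Weyl

theorem stabilizer_wigner_general (d n : ℕ) [NeZero d]
    (M : AddSubgroup ((Fin n → ZMod d) × (Fin n → ZMod d)))
    (hiso : ∀ m₁ ∈ M, ∀ m₂ ∈ M, symp (ZMod d) n m₁ m₂ = 0)
    (hcard : Nat.card M = d ^ n)
    (v : (Fin n → ZMod d) × (Fin n → ZMod d))
    (ψ : (Fin n → ZMod d) → ℂ)
    (hψ : ∑ x : Fin n → ZMod d, Complex.normSq (ψ x) = 1)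
    (hstab : ∀ m ∈ M, chi d (symp (ZMod d) n v m) • (weylV d n m).mulVec ψ = ψ)
    (a : (Fin n → ZMod d) × (Fin n → ZMod d)) :
    ((d : ℂ) ^ (2 * n))⁻¹ *
      ∑ b : (Fin n → ZMod d) × (Fin n → ZMod d),
        chi d (-(symp (ZMod d) n a b)) *
          Matrix.trace ((weylV d n b)ᴴ * Matrix.vecMulVec ψ (star ψ)) =
      if a - v ∈ M then ((d : ℂ) ^ n)⁻¹ else 0 := by
  have hon : ∀ m ∈ M,
      trace ((weylV d n m)ᴴ * vecMulVec ψ (star ψ)) = chi d (symp (ZMod d) n v m) := fun m hm => by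
    rw [trace_conjTranspose_mul_vecMulVec_of_smul_mulVec_eq (normSq_chi _) (hstab m hm), hψ,
      Complex.ofReal_one, mul_one]
  have hoff : ∀ b ∉ M, trace ((weylV d n b)ᴴ * vecMulVec ψ (star ψ)) = 0 := fun b hb =>
    eq_zero_of_sum_normSq_eq_card_mul (fun b => trace ((weylV d n b)ᴴ * vecMulVec ψ (star ψ))) M 1
      (fun m hm => by rw [hon m hm, normSq_chi])
      (by rw [sum_normSq_trace_weylV, hψ, SetLike.coe_sort_coe, hcard]; push_cast; ring) hb
  have hsum : ∑ b, chi d (-(symp (ZMod d) n a b)) * trace ((weylV d n b)ᴴ * vecMulVec ψ (star ψ)) =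
      ∑ m : M, chi d (symp (ZMod d) n (v - a) m) := by
    rw [← Fintype.sum_subtype_add_sum_subtype (· ∈ M),
      add_eq_left.2 (Fintype.sum_eq_zero _ fun b => by rw [hoff b b.2, mul_zero])]
    refine Finset.sum_congr rfl fun m _ => ?_
    rw [hon m m.2, ← chi_add, symp_sub_left, neg_add_eq_sub]
  have hdn : (d : ℂ) ^ n ≠ 0 := pow_ne_zero _ (Nat.cast_ne_zero.2 (NeZero.ne d))
  rw [hsum, sum_chi_symp_eq_ite_mem M hiso hcard, sub_mem_comm_iff]
  split_ifs
  · rw [pow_mul', sq, mul_inv, mul_assoc, inv_mul_cancel₀ hdn, mul_one]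
  · rw [mul_zero]

/-- The Wigner function of a stabilizer state `|M,v⟩` is `d^{-n}` times the
indicator function of the coset `M + v`. -/
theorem stabilizer_wigner (d n : ℕ) [NeZero d] (hd : Odd d)
    (M : AddSubgroup ((Fin n → ZMod d) × (Fin n → ZMod d)))
    (hiso : ∀ m₁ ∈ M, ∀ m₂ ∈ M, symp (ZMod d) n m₁ m₂ = 0)
    (hcard : Nat.card M = d ^ n)
    (v : (Fin n → ZMod d) × (Fin n → ZMod d))
    (ψ : (Fin n → ZMod d) → ℂ)
    (hψ : ∑ x : Fin n → ZMod d, Complex.normSq (ψ x) = 1)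
    (hstab : ∀ m ∈ M, chi d (symp (ZMod d) n v m) • (weylV d n m).mulVec ψ = ψ)
    (a : (Fin n → ZMod d) × (Fin n → ZMod d)) :
    ((d : ℂ) ^ (2 * n))⁻¹ *
      ∑ b : (Fin n → ZMod d) × (Fin n → ZMod d),
        chi d (-(symp (ZMod d) n a b)) *
          Matrix.trace ((weylV d n b)ᴴ * Matrix.vecMulVec ψ (star ψ)) =
      if a - v ∈ M then ((d : ℂ) ^ n)⁻¹ else 0 :=
  stabilizer_wigner_general d n M hiso hcard v ψ hψ hstab a
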